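/- arXiv:2306.11909 — 6 statements merged into one kernel-verified Lean document; each statement's English description precedes it below -/
import Mathlib

section
/- For every integer N ≥ 5, residues r, a, b ∈ ℤ/Nℤ and any two distinct indices α, β with 1 ≤ α, β ≤ N, the number of tuples ℓ ∈ (ℤ/Nℤ)^N with ℓ_α = a, ℓ_β = b and N·H(ℓ) ≡ r (mod N) equals N^(N-3), where H(m) := (1/2)·mᵀm + bᵀm with b = (1/N - 1/2, 2/N - 1/2, …, 1/2)ᵀ; here N·H(ℓ) is interpreted as the residue mod N of N·H applied to any integer representatives of ℓ (this is well-defined). -/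
/-- For an integer vector `m : Fin N → ℤ`, the integer
`N·H(m) = ∑_j (N(m_j² - m_j)/2 + (j+1)·m_j)`, where
`H(m) = (1/2)mᵀm + ∑_j ((j+1)/N - 1/2)·m_j` (indices j+1 running through 1,…,N).
Since `m_j² - m_j` is even, the division is exact. -/
def NH (N : ℕ) (m : Fin N → ℤ) : ℤ :=
  ∑ j : Fin N, ((N : ℤ) * ((m j) ^ 2 - m j) / 2 + ((j : ℕ) + 1 : ℤ) * m j)

lemma NH_term (N : ℕ) (c m : ℤ) :
    (((N : ℤ) * (m ^ 2 - m) / 2 + c * m : ℤ) : ZMod N)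
      = (c : ZMod N) * (m : ZMod N) := by
  have hev : Even (m ^ 2 - m) := by
    have := Int.even_mul_succ_self (m - 1)
    convert this using 1; ring
  obtain ⟨k, hk⟩ := hev
  have h2 : (N : ℤ) * (m ^ 2 - m) / 2 = (N : ℤ) * k := by
    rw [hk]; ring_nf; omega
  rw [h2]
  push_cast
  simp

lemma NH_cast (N : ℕ) (hN : 5 ≤ N) (ℓ : Fin N → ZMod N) :
    ((NH N (fun j => ((ℓ j).val : ℤ)) : ℤ) : ZMod N)
      = ∑ j : Fin N, (((j : ℕ) + 1 : ℕ) : ZMod N) * ℓ j := by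
  haveI : NeZero N := ⟨by omega⟩
  unfold NH
  rw [Int.cast_sum]
  refine Finset.sum_congr rfl fun j _ => ?_
  rw [NH_term]
  push_cast [ZMod.natCast_val, ZMod.intCast_cast, ZMod.intCast_zmod_cast]
  simp [ZMod.natCast_val]


noncomputable def PhiHom (N : ℕ) (α β : Fin N) :
    (Fin N → ZMod N) →+ (ZMod N × ZMod N × ZMod N) where
  toFun ℓ := (ℓ α, ℓ β, ∑ j : Fin N, (((j : ℕ) + 1 : ℕ) : ZMod N) * ℓ j)
  map_zero' := by simp
  map_add' x y := by
    simp [Prod.ext_iff, mul_add, Finset.sum_add_distrib]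

lemma sum_single (N : ℕ) (c : Fin N → ZMod N) (i : Fin N) (x : ZMod N) :
    ∑ j : Fin N, c j * (if j = i then x else 0) = c i * x := by
  simp [mul_ite, Finset.sum_ite_eq']

lemma exists_base (N : ℕ) (hN : 5 ≤ N) (α β : Fin N) (hαβ : α ≠ β) :
    ∃ ℓ : Fin N → ZMod N, ℓ α = 0 ∧ ℓ β = 0 ∧
      ∑ j : Fin N, (((j : ℕ) + 1 : ℕ) : ZMod N) * ℓ j = 1 := by
  have hc : ∀ (i1 i2 : Fin N), (i2 : ℕ) = (i1 : ℕ) + 1 →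
      i1 ≠ α → i1 ≠ β → i2 ≠ α → i2 ≠ β →
      ∃ ℓ : Fin N → ZMod N, ℓ α = 0 ∧ ℓ β = 0 ∧
        ∑ j : Fin N, (((j : ℕ) + 1 : ℕ) : ZMod N) * ℓ j = 1 := by
    intro i1 i2 h12 h1a h1b h2a h2b
    refine ⟨fun j => (if j = i2 then 1 else 0) + (if j = i1 then -1 else 0),
      ?_, ?_, ?_⟩
    · simp [Ne.symm h2a, Ne.symm h1a]
    · simp [Ne.symm h2b, Ne.symm h1b]
    · rw [Finset.sum_congr rfl (fun j _ => mul_add _ _ _), Finset.sum_add_distrib,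
        sum_single, sum_single, h12]
      push_cast
      ring
  have h1 : (1 : ℕ) < N := by omega
  have h2 : (2 : ℕ) < N := by omega
  have h3 : (3 : ℕ) < N := by omega
  have h4 : (4 : ℕ) < N := by omega
  by_cases H12 : (⟨1, h1⟩ : Fin N) ≠ α ∧ (⟨1, h1⟩ : Fin N) ≠ β ∧
      (⟨2, h2⟩ : Fin N) ≠ α ∧ (⟨2, h2⟩ : Fin N) ≠ β
  · exact hc ⟨1, h1⟩ ⟨2, h2⟩ rfl H12.1 H12.2.1 H12.2.2.1 H12.2.2.2
  by_cases H34 : (⟨3, h3⟩ : Fin N) ≠ α ∧ (⟨3, h3⟩ : Fin N) ≠ β ∧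
      (⟨4, h4⟩ : Fin N) ≠ α ∧ (⟨4, h4⟩ : Fin N) ≠ β
  · exact hc ⟨3, h3⟩ ⟨4, h4⟩ rfl H34.1 H34.2.1 H34.2.2.1 H34.2.2.2
  -- now α, β ∈ {1,2,3,4}, so index 0 is free; its coefficient is 1
  have h0 : (0 : ℕ) < N := by omega
  simp only [not_and_or, not_not, ne_eq, Fin.ext_iff] at H12 H34
  have hα : (α : ℕ) ≠ 0 ∧ (β : ℕ) ≠ 0 := by omega
  refine ⟨fun j => if j = ⟨0, h0⟩ then 1 else 0, ?_, ?_, ?_⟩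
  · simp [Fin.ext_iff, hα.1]
  · simp [Fin.ext_iff, hα.2]
  · rw [sum_single]
    norm_num


lemma Phi_surj (N : ℕ) (hN : 5 ≤ N) (α β : Fin N) (hαβ : α ≠ β) :
    Function.Surjective (PhiHom N α β) := by
  rintro ⟨a, b, r⟩
  obtain ⟨ℓ0, h0a, h0b, h0s⟩ := exists_base N hN α β hαβ
  set s : ZMod N := r - (((α : ℕ) + 1 : ℕ) : ZMod N) * a - (((β : ℕ) + 1 : ℕ) : ZMod N) * b with hs
  refine ⟨fun j => (if j = α then a else 0) + (if j = β then b else 0) + s * ℓ0 j, ?_⟩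
  have hsum : ∑ j : Fin N, (((j : ℕ) + 1 : ℕ) : ZMod N) *
      ((if j = α then a else 0) + (if j = β then b else 0) + s * ℓ0 j)
      = (((α : ℕ) + 1 : ℕ) : ZMod N) * a + (((β : ℕ) + 1 : ℕ) : ZMod N) * b + s := by
    have expand : ∀ j : Fin N, (((j : ℕ) + 1 : ℕ) : ZMod N) *
        ((if j = α then a else 0) + (if j = β then b else 0) + s * ℓ0 j)
        = (((j : ℕ) + 1 : ℕ) : ZMod N) * (if j = α then a else 0)
          + (((j : ℕ) + 1 : ℕ) : ZMod N) * (if j = β then b else 0)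
          + s * ((((j : ℕ) + 1 : ℕ) : ZMod N) * ℓ0 j) := fun j => by ring
    rw [Finset.sum_congr rfl fun j _ => expand j, Finset.sum_add_distrib,
      Finset.sum_add_distrib, sum_single, sum_single, ← Finset.mul_sum, h0s, mul_one]
  simp only [PhiHom, AddMonoidHom.coe_mk, ZeroHom.coe_mk, Prod.mk.injEq]
  refine ⟨?_, ?_, ?_⟩
  · simp [hαβ, h0a]
  · simp [Ne.symm hαβ, h0b]
  · rw [hsum, hs]; ring

theorem cardinality (N : ℕ) (hN : 5 ≤ N) (r a b : ZMod N)
    (α β : Fin N) (hαβ : α ≠ β) :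
    Nat.card {ℓ : Fin N → ZMod N // PhiHom N α β ℓ = (a, b, r)} = N ^ (N - 3) := by
  haveI : NeZero N := ⟨by omega⟩
  obtain ⟨x0, hx0⟩ := Phi_surj N hN α β hαβ (a, b, r)
  have e : {ℓ : Fin N → ZMod N // PhiHom N α β ℓ = (a, b, r)} ≃ (PhiHom N α β).ker :=
    { toFun := fun x => ⟨x.1 - x0, by
        simp [AddMonoidHom.mem_ker, map_sub, x.2, hx0]⟩
      invFun := fun k => ⟨k.1 + x0, by
        have := k.2
        rw [AddMonoidHom.mem_ker] at this
        simp [map_add, this, hx0]⟩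
      left_inv := fun x => by simp
      right_inv := fun k => by simp }
  rw [Nat.card_congr e]
  have hq := AddSubgroup.card_eq_card_quotient_mul_card_addSubgroup (PhiHom N α β).ker
  have hquot : Nat.card ((Fin N → ZMod N) ⧸ (PhiHom N α β).ker)
      = Nat.card (ZMod N × ZMod N × ZMod N) :=
    Nat.card_congr (QuotientAddGroup.quotientKerEquivOfSurjective _ (Phi_surj N hN α β hαβ)).toEquiv
  have hdom : Nat.card (Fin N → ZMod N) = N ^ N := by
    simp [Nat.card_pi, Nat.card_zmod]
  have hcod : Nat.card (ZMod N × ZMod N × ZMod N) = N ^ 3 := by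
    simp [Nat.card_prod, Nat.card_zmod]; ring
  rw [hquot, hcod, hdom] at hq
  have hNN : N ^ N = N ^ 3 * N ^ (N - 3) := by
    rw [← pow_add]; congr 1; omega
  have h3 : 0 < N ^ 3 := by positivity
  exact Nat.eq_of_mul_eq_mul_left h3 (hq.symm.trans hNN)

/-- For N ≥ 5, residues r, a, b ∈ ZMod N, and distinct indices α, β, the number of tuples
ℓ ∈ (ZMod N)^N with ℓ_α = a, ℓ_β = b and N·H(ℓ) ≡ r (mod N) equals N^(N-3). -/
theorem count_tuples_fixed_two_coords (N : ℕ) (hN : 5 ≤ N) (r a b : ZMod N)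
    (α β : Fin N) (hαβ : α ≠ β) :
    Nat.card {ℓ : Fin N → ZMod N //
      ℓ α = a ∧ ℓ β = b ∧
        ((NH N (fun j => ((ℓ j).val : ℤ)) : ZMod N) = r)} = N ^ (N - 3) := by
  haveI : NeZero N := ⟨by omega⟩
  have e : {ℓ : Fin N → ZMod N //
      ℓ α = a ∧ ℓ β = b ∧
        ((NH N (fun j => ((ℓ j).val : ℤ)) : ZMod N) = r)}
      ≃ {ℓ : Fin N → ZMod N // PhiHom N α β ℓ = (a, b, r)} :=
    Equiv.subtypeEquivRight (fun ℓ => by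
      rw [NH_cast N hN ℓ]
      simp [PhiHom, Prod.ext_iff])
  rw [Nat.card_congr e, cardinality N hN r a b α β hαβ]
end

section
/- For every integer N ≥ 2 and residue r ∈ ℤ/Nℤ, the number of tuples ℓ ∈ (ℤ/Nℤ)^N with N·H(ℓ) ≡ r (mod N) equals N^(N-1), where H(m) := (1/2)·mᵀm + bᵀm with b = (1/N - 1/2, 2/N - 1/2, …, 1/2)ᵀ. -/
open Function

theorem AddMonoidHom.card_fiber_mul_card_of_surjective {G H : Type*} [AddGroup G] [AddGroup H]
    {f : G →+ H} (hf : Surjective f) (h : H) :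
    Nat.card (f ⁻¹' {h}) * Nat.card H = Nat.card G := by
  rw [Nat.card_congr (f.fiberEquivKerOfSurjective hf h), ← AddSubgroup.card_top (G := H),
    ← AddMonoidHom.range_eq_top.mpr hf, ← AddSubgroup.index_ker, AddSubgroup.card_mul_index]

theorem Fintype.linearCombination_surjective_of_isUnit {R ι : Type*} [Semiring R] [Fintype ι]
    {c : ι → R} {i : ι} (hi : IsUnit (c i)) : Surjective (Fintype.linearCombination R c) := by
  rw [← span_range_eq_top_iff_surjective_fintypeLinearCombination]
  exact Ideal.eq_top_of_isUnit_mem _ (Submodule.subset_span ⟨i, rfl⟩) hi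

theorem intCast_NH_eq_sum (N : ℕ) (m : Fin N → ℤ) :
    (NH N m : ZMod N) = ∑ j, (m j : ZMod N) * ((j : ℕ) + 1 : ZMod N) := by
  rw [NH, Int.cast_sum]
  refine Finset.sum_congr rfl fun j _ => ?_
  have htwo : (2 : ℤ) ∣ m j ^ 2 - m j := by
    simpa [sq, ← mul_sub_one] using (Int.even_mul_pred_self (m j)).two_dvd
  rw [Int.mul_ediv_assoc _ htwo]
  push_cast
  rw [ZMod.natCast_self]
  ring

/-- For N ≥ 2 and any residue r ∈ ℤ/Nℤ, the number of tuples ℓ ∈ (ℤ/Nℤ)^N with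
N·H(ℓ) ≡ r (mod N) equals N^(N-1). -/
theorem count_tuples (N : ℕ) (hN : 2 ≤ N) (r : ZMod N) :
    Nat.card {ℓ : Fin N → ZMod N //
      ((NH N (fun j => ((ℓ j).val : ℤ)) : ZMod N) = r)} = N ^ (N - 1) := by
  have : NeZero N := ⟨by omega⟩
  set f := Fintype.linearCombination (ZMod N) fun j : Fin N => ((j : ℕ) + 1 : ZMod N)
  have hf : Surjective f := Fintype.linearCombination_surjective_of_isUnit (i := 0) (by simp)
  have hfiber : {ℓ : Fin N → ZMod N // ((NH N (fun j => ((ℓ j).val : ℤ)) : ZMod N) = r)}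
      ≃ f ⁻¹' {r} :=
    Equiv.subtypeEquivRight fun ℓ => by
      simp [f, intCast_NH_eq_sum, Fintype.linearCombination_apply, smul_eq_mul]
  have hcard := AddMonoidHom.card_fiber_mul_card_of_surjective (f := f.toAddMonoidHom) hf r
  have hpow : N ^ N = N ^ (N - 1) * N := by rw [← pow_succ, Nat.sub_one_add_one (NeZero.ne N)]
  rw [Nat.card_pi, Nat.card_zmod, Finset.prod_const, Finset.card_univ, Fintype.card_fin, hpow]
    at hcard
  rw [Nat.card_congr hfiber]
  exact Nat.eq_of_mul_eq_mul_right (NeZero.pos N) hcard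
end

section
/- For N ∈ ℕ and m = (m₁,…,m_N) ∈ ℕ₀^N, the number of partitions of n into distinct positive parts having exactly m_j parts congruent to j mod N for each 1 ≤ j ≤ N has generating function Σ_{n≥0} d_m(n) qⁿ = q^{N·H(m)} / ∏_{j=1}^N (q^N; q^N)_{m_j}, where H(m) = (1/2)mᵀm + Σ_j (j/N - 1/2)m_j and (a;q)_k = ∏_{i=0}^{k-1}(1 - a q^i). -/
open PowerSeries

/-- The natural number `N·H(m) = ∑_j (N·m_j(m_j-1)/2 + (j+1)·m_j)` for `m ∈ ℕ₀^N`, where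
`H(m) = (1/2)mᵀm + ∑_j ((j+1)/N - 1/2)m_j` (the index j+1 runs through 1,…,N). -/
def NHnat (N : ℕ) (m : Fin N → ℕ) : ℕ :=
  ∑ j : Fin N, (N * (m j * (m j - 1) / 2) + ((j : ℕ) + 1) * m j)

/-- `dctN N m n` is the number of partitions of `n` into distinct positive parts having
exactly `m j` parts congruent to `j+1` mod `N`, for each `j`. -/
noncomputable def dctN (N : ℕ) (m : Fin N → ℕ) (n : ℕ) : ℕ :=
  Nat.card {p : n.Partition // p.parts.Nodup ∧
    ∀ j : Fin N, (p.parts.filter (fun p => p % N = ((j : ℕ) + 1) % N)).card = m j}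

/-! Write `r = j + 1` and let `m⁺` be `m` with `m_j` increased by one. Adding `N` to every part
`≡ r (mod N)` maps the partitions counted by `d_m` bijectively onto those of them that avoid the
part `r` (a part `≡ r` other than `r` is at least `r + N`), raising the sum by `N m_j`; adjoining
the part `r` then maps those bijectively onto the partitions counted by `d_{m⁺}` that contain `r`.
Splitting `d_{m⁺}` according to whether `r` is a part, the generating functions satisfy
`F_{m⁺} (1 - q^{N (m_j + 1)}) = q^{r + N m_j} F_m`, and induction on `m` from `F_0 = 1` gives the
product formula. -/

namespace DistinctPartsByResidue

open Function

section Updates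

@[to_additive]
theorem prod_apply_update {ι M : Type*} [Fintype ι] [DecidableEq ι] [CommMonoid M]
    (g : ι → ℕ → M) (m : ι → ℕ) (j : ι) (v : ℕ) :
    ∏ i, g i (update m j v i) = g j v * ∏ i ∈ Finset.univ.erase j, g i (m i) := by
  simp_rw [apply_update g]
  rw [Finset.prod_update_of_mem (Finset.mem_univ j), Finset.sdiff_singleton_eq_erase]

theorem update_succ_induction {ι : Type*} [Fintype ι] [DecidableEq ι] {p : (ι → ℕ) → Prop}
    (zero : p 0) (succ : ∀ m j, p m → p (update m j (m j + 1))) (m : ι → ℕ) : p m := by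
  induction h : ∑ i, m i generalizing m with
  | zero =>
    obtain rfl : m = 0 := funext fun i => Finset.sum_eq_zero_iff.1 h i (Finset.mem_univ i)
    exact zero
  | succ k ih =>
    obtain ⟨j, -, hj⟩ := Finset.exists_ne_zero_of_sum_ne_zero (h.trans_ne k.succ_ne_zero)
    set m' := update m j (m j - 1)
    have hm : update m' j (m' j + 1) = m := by
      simp [m', Nat.sub_add_cancel (Nat.pos_of_ne_zero hj)]
    have hsum : ∑ i, m' i = k := by
      have := Finset.add_sum_erase Finset.univ m (Finset.mem_univ j)
      rw [sum_apply_update (fun _ v => v)]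
      omega
    rw [← hm]
    exact succ m' j (ih m' hsum)

end Updates

section Residues

variable {N r c : ℕ}

theorem le_of_mod_eq (hrN : r ≤ N) (hc : 0 < c) (h : c % N = r % N) : r ≤ c := by
  by_contra! hcr
  rw [Nat.mod_eq_of_lt (hcr.trans_le hrN)] at h
  rcases hrN.lt_or_eq with hrN | rfl
  · rw [Nat.mod_eq_of_lt hrN] at h
    omega
  · rw [Nat.mod_self] at h
    omega

theorem add_le_of_mod_eq (hrN : r ≤ N) (hc : 0 < c) (h : c % N = r % N) (hne : c ≠ r) :
    r + N ≤ c := by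
  have hrc := le_of_mod_eq hrN hc h
  have := Nat.le_of_dvd (by omega) ((Nat.modEq_iff_dvd' hrc).1 h.symm)
  omega

theorem succ_mod_eq_succ_mod_iff {j j' : Fin N} :
    ((j : ℕ) + 1) % N = ((j' : ℕ) + 1) % N ↔ j = j' := by
  refine ⟨fun h => Fin.ext ?_, fun h => h ▸ rfl⟩
  have := le_of_mod_eq j'.isLt (Nat.succ_pos _) h
  have := le_of_mod_eq j.isLt (Nat.succ_pos _) h.symm
  omega

theorem exists_succ_mod_eq (hN : 0 < N) (c : ℕ) : ∃ j : Fin N, ((j : ℕ) + 1) % N = c % N :=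
  ⟨⟨(c + N - 1) % N, Nat.mod_lt _ hN⟩, by
    rw [Nat.mod_add_mod, show c + N - 1 + 1 = c + N by omega, Nat.add_mod_right]⟩

end Residues

section Raise

def raise (N r c : ℕ) : ℕ := if c % N = r % N then c + N else c

variable {N r : ℕ}

theorem raise_mod (c : ℕ) : raise N r c % N = c % N := by
  unfold raise
  split_ifs <;> simp

theorem le_raise (c : ℕ) : c ≤ raise N r c := by
  unfold raise
  split_ifs <;> omega

theorem raise_injective : Injective (raise N r) := by
  intro a b h
  have hmod : a % N = b % N := by rw [← raise_mod (r := r) a, h, raise_mod]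
  simp only [raise, hmod] at h
  split_ifs at h <;> omega

theorem raise_ne (hrN : r ≤ N) {c : ℕ} (hc : 0 < c) : raise N r c ≠ r := by
  unfold raise
  split_ifs with h
  · omega
  · rintro rfl
    exact h rfl

theorem exists_pos_raise_eq (hr : 0 < r) (hrN : r ≤ N) {c : ℕ} (hc : 0 < c) (hne : c ≠ r) :
    ∃ a, 0 < a ∧ raise N r a = c := by
  by_cases h : c % N = r % N
  · have := add_le_of_mod_eq hrN hc h hne
    obtain ⟨a, rfl⟩ : ∃ a, c = a + N := ⟨c - N, by omega⟩
    rw [Nat.add_mod_right] at h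
    exact ⟨a, by omega, if_pos h⟩
  · exact ⟨c, hc, if_neg h⟩

theorem sum_map_raise (s : Multiset ℕ) :
    (s.map (raise N r)).sum = s.sum + N * (s.filter (fun c => c % N = r % N)).card := by
  induction s using Multiset.induction_on with
  | empty => simp
  | cons a s ih =>
    by_cases h : a % N = r % N <;> simp [raise, h, ih] <;> ring

theorem card_filter_mod_map_raise (a : ℕ) (s : Multiset ℕ) :
    ((s.map (raise N r)).filter (fun c => c % N = a)).card =
      (s.filter (fun c => c % N = a)).card := by
  rw [Multiset.filter_map, Multiset.card_map]
  simp only [comp_def, raise_mod]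

theorem exists_map_raise_eq (hr : 0 < r) (hrN : r ≤ N) {s : Multiset ℕ}
    (hpos : ∀ c ∈ s, 0 < c) (hs : r ∉ s) :
    ∃ t : Multiset ℕ, (∀ a ∈ t, 0 < a) ∧ t.map (raise N r) = s := by
  choose! f hf using fun c (hc : c ∈ s) =>
    exists_pos_raise_eq hr hrN (hpos c hc) (ne_of_mem_of_not_mem hc hs)
  refine ⟨s.map f, by simpa using fun c hc => (hf c hc).1, ?_⟩
  rw [Multiset.map_map]
  conv_rhs => rw [← Multiset.map_id s]
  exact Multiset.map_congr rfl fun c hc => (hf c hc).2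

end Raise

def HasClassCounts (N : ℕ) (m : Fin N → ℕ) (s : Multiset ℕ) : Prop :=
  s.Nodup ∧ ∀ j : Fin N, (s.filter (fun c => c % N = ((j : ℕ) + 1) % N)).card = m j

def distinctClassParts (N : ℕ) (m : Fin N → ℕ) : Set (Multiset ℕ) :=
  {s | (∀ c ∈ s, 0 < c) ∧ HasClassCounts N m s}

section ClassCounts

variable {N : ℕ} {m : Fin N → ℕ}

theorem hasClassCounts_map_raise_iff {r : ℕ} {s : Multiset ℕ} :
    HasClassCounts N m (s.map (raise N r)) ↔ HasClassCounts N m s := by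
  simp only [HasClassCounts, Multiset.nodup_map_iff_of_injective raise_injective,
    card_filter_mod_map_raise]

theorem hasClassCounts_update_cons_iff (j : Fin N) {s : Multiset ℕ} :
    HasClassCounts N (update m j (m j + 1)) (((j : ℕ) + 1) ::ₘ s) ↔
      HasClassCounts N m s ∧ (j : ℕ) + 1 ∉ s := by
  have hcount : ∀ j' : Fin N,
      ((((j : ℕ) + 1) ::ₘ s).filter (fun c => c % N = ((j' : ℕ) + 1) % N)).card =
        update m j (m j + 1) j' ↔
          (s.filter (fun c => c % N = ((j' : ℕ) + 1) % N)).card = m j' := by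
    intro j'
    rw [Multiset.filter_cons, update_apply]
    by_cases h : j' = j
    · subst h
      simp
    · simp [succ_mod_eq_succ_mod_iff, Ne.symm h, h]
  simp only [HasClassCounts, Multiset.nodup_cons, hcount]
  tauto

theorem mem_distinctClassParts_zero (hN : 0 < N) {s : Multiset ℕ} :
    s ∈ distinctClassParts N 0 ↔ s = 0 := by
  refine ⟨fun ⟨_, _, hcount⟩ => Multiset.eq_zero_of_forall_notMem fun c hc => ?_, ?_⟩
  · obtain ⟨j, hj⟩ := exists_succ_mod_eq hN c
    have := Multiset.card_eq_zero.1 (hcount j)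
    exact Multiset.notMem_zero c (this ▸ Multiset.mem_filter.2 ⟨hc, hj.symm⟩)
  · rintro rfl
    simp [distinctClassParts, HasClassCounts]

theorem finite_distinctClassParts_sum_eq (n : ℕ) :
    {s ∈ distinctClassParts N m | s.sum = n}.Finite :=
  (Set.finite_range fun p : n.Partition => p.parts).subset fun s hs =>
    ⟨⟨s, fun hc => hs.1.1 _ hc, hs.2⟩, rfl⟩

theorem dctN_eq_ncard (n : ℕ) :
    dctN N m n = {s ∈ distinctClassParts N m | s.sum = n}.ncard := by
  rw [← Nat.card_coe_set_eq]
  exact Nat.card_congr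
    { toFun := fun p => ⟨p.1.parts, ⟨fun _ => p.1.parts_pos, p.2⟩, p.1.parts_sum⟩
      invFun := fun s => ⟨⟨s.1, s.2.1.1 _, s.2.2⟩, s.2.1.2⟩
      left_inv := fun _ => rfl
      right_inv := fun _ => rfl }

end ClassCounts

section Bijections

variable {N : ℕ} (m : Fin N → ℕ) (j : Fin N)

theorem bijOn_map_raise :
    Set.BijOn (Multiset.map (raise N ((j : ℕ) + 1))) (distinctClassParts N m)
      (distinctClassParts N m \ {s | (j : ℕ) + 1 ∈ s}) := by
  refine ⟨fun s ⟨hpos, hs⟩ => ⟨⟨?_, hasClassCounts_map_raise_iff.2 hs⟩, ?_⟩,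
    (Multiset.map_injective raise_injective).injOn, fun s ⟨⟨hpos, hs⟩, hj⟩ => ?_⟩
  · simpa using fun c hc => (hpos c hc).trans_le (le_raise c)
  · simpa using fun c hc => raise_ne j.isLt (hpos c hc)
  · obtain ⟨t, htpos, rfl⟩ := exists_map_raise_eq (Nat.succ_pos _) j.isLt hpos hj
    exact ⟨t, ⟨htpos, hasClassCounts_map_raise_iff.1 hs⟩, rfl⟩

theorem bijOn_cons :
    Set.BijOn (Multiset.cons ((j : ℕ) + 1)) (distinctClassParts N m \ {s | (j : ℕ) + 1 ∈ s})
      (distinctClassParts N (update m j (m j + 1)) ∩ {s | (j : ℕ) + 1 ∈ s}) := by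
  refine ⟨fun s ⟨⟨hpos, hs⟩, hj⟩ =>
    ⟨⟨?_, (hasClassCounts_update_cons_iff j).2 ⟨hs, hj⟩⟩, Multiset.mem_cons_self _ _⟩,
    fun s _ t _ => (Multiset.cons_inj_right _).1, ?_⟩
  · simpa using hpos
  · rintro s ⟨⟨hpos, hs⟩, hj : (j : ℕ) + 1 ∈ s⟩
    rw [← Multiset.cons_erase hj] at hpos hs
    obtain ⟨hs, hj'⟩ := (hasClassCounts_update_cons_iff j).1 hs
    refine ⟨s.erase ((j : ℕ) + 1), ⟨⟨fun c hc => ?_, hs⟩, hj'⟩,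
      Multiset.cons_erase hj⟩
    exact hpos c (Multiset.mem_cons_of_mem hc)

end Bijections

section GenFun

variable (R : Type*) [Semiring R]

noncomputable def genFun (A : Set (Multiset ℕ)) : R⟦X⟧ :=
  mk fun n => ({s ∈ A | s.sum = n}.ncard : R)

variable {R} {A B : Set (Multiset ℕ)}

theorem genFun_eq_X_pow_mul_of_bijOn {f : Multiset ℕ → Multiset ℕ} {k : ℕ}
    (hf : Set.BijOn f A B) (hsum : ∀ s ∈ A, (f s).sum = s.sum + k) :
    genFun R B = X ^ k * genFun R A := by
  ext n
  rw [coeff_X_pow_mul', genFun, genFun, coeff_mk, coeff_mk]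
  split_ifs with hk
  · have himage : f '' {s ∈ A | s.sum = n - k} = {s ∈ B | s.sum = n} := by
      ext s
      constructor
      · rintro ⟨a, ⟨ha, hsa⟩, rfl⟩
        exact ⟨hf.mapsTo ha, by rw [hsum a ha]; omega⟩
      · rintro ⟨hs, rfl⟩
        obtain ⟨a, ha, rfl⟩ := hf.surjOn hs
        exact ⟨a, ⟨ha, by rw [hsum a ha]; omega⟩, rfl⟩
    rw [← himage, (hf.injOn.mono fun _ h => h.1).ncard_image]
  · have hempty : {s ∈ B | s.sum = n} = ∅ := by
      refine Set.eq_empty_of_forall_notMem fun s ⟨hs, hsn⟩ => hk ?_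
      obtain ⟨a, ha, rfl⟩ := hf.surjOn hs
      rw [← hsn, hsum a ha]
      omega
    simp [hempty]

theorem genFun_eq_inter_add_diff (hA : ∀ n, {s ∈ A | s.sum = n}.Finite)
    (T : Set (Multiset ℕ)) :
    genFun R A = genFun R (A ∩ T) + genFun R (A \ T) := by
  ext n
  rw [genFun, genFun, genFun, map_add, coeff_mk, coeff_mk, coeff_mk, ← Nat.cast_add,
    ← Set.ncard_inter_add_ncard_sdiff_eq_ncard _ T (hA n)]
  congr 3 <;> ext s <;> simp only [Set.mem_ofPred_eq, Set.mem_inter_iff, Set.mem_sdiff] <;> tauto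

theorem genFun_singleton_zero : genFun R {0} = 1 := by
  ext n
  have hfiber : {s ∈ ({0} : Set (Multiset ℕ)) | s.sum = n} = if n = 0 then {0} else ∅ := by
    ext s
    split_ifs with hn <;> aesop
  rw [genFun, coeff_mk, coeff_one, hfiber]
  split_ifs <;> simp

theorem mk_dctN_eq_genFun (N : ℕ) (m : Fin N → ℕ) :
    mk (fun n => (dctN N m n : R)) = genFun R (distinctClassParts N m) :=
  congrArg mk <| funext fun n => by rw [dctN_eq_ncard]

end GenFun

section Recursion

variable {R : Type*} [CommRing R] {N : ℕ} (m : Fin N → ℕ) (j : Fin N)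

theorem genFun_update_succ_mul :
    genFun R (distinctClassParts N (update m j (m j + 1))) * (1 - X ^ (N * (m j + 1))) =
      X ^ ((j : ℕ) + 1 + N * m j) * genFun R (distinctClassParts N m) := by
  set m' := update m j (m j + 1)
  have hm' : m' j = m j + 1 := update_self ..
  have hsplit := genFun_eq_inter_add_diff (R := R) finite_distinctClassParts_sum_eq
    {s : Multiset ℕ | (j : ℕ) + 1 ∈ s} (A := distinctClassParts N m')
  have hnot := genFun_eq_X_pow_mul_of_bijOn (R := R) (bijOn_map_raise m' j) fun s hs => by
    rw [sum_map_raise, hs.2.2 j, hm']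
  have hmem := genFun_eq_X_pow_mul_of_bijOn (R := R) (bijOn_cons m j) fun s _ => by
    rw [Multiset.sum_cons, add_comm]
  have hraise := genFun_eq_X_pow_mul_of_bijOn (R := R) (bijOn_map_raise m j) fun s hs => by
    rw [sum_map_raise, hs.2.2 j]
  rw [hraise] at hmem
  linear_combination hsplit + hnot + hmem


theorem NHnat_update_succ :
    NHnat N (update m j (m j + 1)) = NHnat N m + ((j : ℕ) + 1 + N * m j) := by
  have htri : (m j + 1) * (m j + 1 - 1) / 2 = m j * (m j - 1) / 2 + m j := by
    rw [← Nat.choose_two_right, ← Nat.choose_two_right, Nat.choose_succ_succ',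
      Nat.choose_one_right, add_comm]
  have := Finset.add_sum_erase Finset.univ
    (fun i : Fin N => N * (m i * (m i - 1) / 2) + ((i : ℕ) + 1) * m i) (Finset.mem_univ j)
  rw [NHnat, NHnat,
    sum_apply_update (fun (i : Fin N) v => N * (v * (v - 1) / 2) + ((i : ℕ) + 1) * v), htri,
    ← this]
  ring

theorem prod_update_succ :
    ∏ i, ∏ k ∈ Finset.range (update m j (m j + 1) i), (1 - (X : R⟦X⟧) ^ (N * (k + 1))) =
      (∏ i, ∏ k ∈ Finset.range (m i), (1 - (X : R⟦X⟧) ^ (N * (k + 1)))) *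
        (1 - X ^ (N * (m j + 1))) := by
  rw [prod_apply_update (fun _ v => ∏ k ∈ Finset.range v, (1 - (X : R⟦X⟧) ^ (N * (k + 1)))),
    Finset.prod_range_succ, ← Finset.mul_prod_erase Finset.univ _ (Finset.mem_univ j)]
  ring

theorem genFun_mul_prod (hN : 0 < N) :
    genFun R (distinctClassParts N m) *
        ∏ i, ∏ k ∈ Finset.range (m i), (1 - (X : R⟦X⟧) ^ (N * (k + 1))) =
      X ^ NHnat N m := by
  induction m using update_succ_induction with
  | zero =>
    have : distinctClassParts N 0 = {0} := Set.ext fun _ => mem_distinctClassParts_zero hN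
    simp [this, genFun_singleton_zero, NHnat]
  | succ m j ih =>
    rw [prod_update_succ, NHnat_update_succ, pow_add, ← ih]
    linear_combination (∏ i, ∏ k ∈ Finset.range (m i), (1 - (X : R⟦X⟧) ^ (N * (k + 1)))) *
      genFun_update_succ_mul (R := R) m j

end Recursion

end DistinctPartsByResidue

open DistinctPartsByResidue in
/-- Generating function: `∑_{n≥0} d_m(n) qⁿ = q^{N·H(m)} / ∏_{j=1}^N (q^N; q^N)_{m_j}`,
as formal power series, where `(q^N;q^N)_k = ∏_{i=0}^{k-1}(1 - q^N·q^{Ni})`. -/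
theorem gen_fun_distinct_parts_congruence (N : ℕ) (hN : 0 < N) (m : Fin N → ℕ) :
    PowerSeries.mk (fun n => (dctN N m n : ℚ)) =
      (PowerSeries.X : PowerSeries ℚ) ^ (NHnat N m) *
        (∏ j : Fin N, ∏ i ∈ Finset.range (m j),
          (1 - (PowerSeries.X : PowerSeries ℚ) ^ (N * (i + 1))))⁻¹ := by
  have hconst : constantCoeff (∏ j : Fin N, ∏ i ∈ Finset.range (m j),
      (1 - (X : ℚ⟦X⟧) ^ (N * (i + 1)))) ≠ 0 := by
    simp [map_prod, hN.ne']
  rw [eq_mul_inv_iff_mul_eq hconst, mk_dctN_eq_genFun]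
  exact genFun_mul_prod m hN
end

section
/- The generating function for the number d(n) of partitions of n into distinct parts satisfies Σ_{n≥0} d(n) qⁿ = Σ_{n≥0} q^{n(n+1)/2} / (q;q)_n as formal power series, where (q;q)_n = ∏_{j=0}^{n-1}(1 - q^{j+1}). -/
/-!
Group the distinct partitions of `k` by their number `n` of parts and encode each as the set of
its parts. Subtracting `1` from every part maps the sets of `n` positive integers with sum `m + n`
bijectively onto the sets of `n` naturals with sum `m`; splitting the latter according to whether
they contain `0` shows that the generating series `Dₙ` of partitions into `n` distinct parts
satisfies `Dₙ₊₁ = qⁿ⁺¹ (Dₙ₊₁ + Dₙ)`, that is `(1 - qⁿ⁺¹) Dₙ₊₁ = qⁿ⁺¹ Dₙ`. Since `D₀ = 1`, this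
gives `Dₙ = q^(1 + ⋯ + n) / (q;q)ₙ`.
-/

open Finset PowerSeries

def finsetsWithSum (n m : ℕ) : Finset (Finset ℕ) :=
  {u ∈ (range (m + 1)).powersetCard n | ∑ i ∈ u, i = m}

def distinctPartSets (n m : ℕ) : Finset (Finset ℕ) :=
  {u ∈ finsetsWithSum n m | 0 ∉ u}

lemma mem_finsetsWithSum {n m : ℕ} {u : Finset ℕ} :
    u ∈ finsetsWithSum n m ↔ #u = n ∧ ∑ i ∈ u, i = m := by
  simp only [finsetsWithSum, mem_filter, mem_powersetCard, and_assoc, and_iff_right_iff_imp]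
  rintro ⟨-, rfl⟩ i hi
  exact mem_range_succ_iff.mpr (single_le_sum (f := id) (fun _ _ ↦ Nat.zero_le _) hi)

lemma mem_distinctPartSets {n m : ℕ} {u : Finset ℕ} :
    u ∈ distinctPartSets n m ↔ #u = n ∧ ∑ i ∈ u, i = m ∧ 0 ∉ u := by
  rw [distinctPartSets, mem_filter, mem_finsetsWithSum, and_assoc]

lemma card_le_sum_of_zero_notMem {u : Finset ℕ} (hu : 0 ∉ u) : #u ≤ ∑ i ∈ u, i := by
  simpa using card_nsmul_le_sum u id 1 fun i hi ↦
    Nat.one_le_iff_ne_zero.mpr (ne_of_mem_of_not_mem hi hu)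

lemma distinctPartSets_eq_empty_of_lt {n m : ℕ} (h : m < n) : distinctPartSets n m = ∅ := by
  refine eq_empty_of_forall_notMem fun u hu ↦ ?_
  obtain ⟨rfl, rfl, h0⟩ := mem_distinctPartSets.mp hu
  exact h.not_ge (card_le_sum_of_zero_notMem h0)

lemma distinctPartSets_zero (m : ℕ) : distinctPartSets 0 m = if m = 0 then {∅} else ∅ := by
  ext u
  simp only [mem_distinctPartSets, card_eq_zero]
  split_ifs with hm <;> aesop

lemma map_add_one_image_sub_one {u : Finset ℕ} (h0 : 0 ∉ u) :
    (u.image (· - 1)).map (addRightEmbedding 1) = u := by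
  rw [map_eq_image, image_image]
  refine (image_congr fun i hi ↦ ?_).trans image_id
  exact Nat.sub_add_cancel (Nat.one_le_iff_ne_zero.mpr (ne_of_mem_of_not_mem hi h0))

lemma card_distinctPartSets_add (n m : ℕ) :
    #(distinctPartSets n (m + n)) = #(finsetsWithSum n m) := by
  have mem_shift {u : Finset ℕ} :
      u.map (addRightEmbedding 1) ∈ distinctPartSets n (m + n) ↔ u ∈ finsetsWithSum n m := by
    simp +contextual [mem_distinctPartSets, mem_finsetsWithSum, sum_add_distrib]
  symm
  refine card_nbij' (map (addRightEmbedding 1)) (image (· - 1)) (fun u hu ↦ mem_shift.mpr hu)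
    (fun u hu ↦ ?_) (fun u _ ↦ by simp [map_eq_image, image_image, Function.comp_def])
    (fun u hu ↦ map_add_one_image_sub_one (mem_distinctPartSets.mp hu).2.2)
  rw [mem_coe, ← mem_shift, map_add_one_image_sub_one (mem_distinctPartSets.mp hu).2.2]
  exact hu

lemma card_finsetsWithSum_succ (n m : ℕ) :
    #(finsetsWithSum (n + 1) m) = #(distinctPartSets (n + 1) m) + #(distinctPartSets n m) := by
  rw [← card_filter_add_card_filter_not (0 ∉ ·)]
  congr 1
  simp only [not_not]
  refine card_nbij' (erase · 0) (insert 0) ?_ ?_ ?_ ?_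
  · intro u hu
    obtain ⟨hu, h0⟩ := mem_filter.mp hu
    obtain ⟨hcard, rfl⟩ := mem_finsetsWithSum.mp hu
    simp [mem_distinctPartSets, card_erase_of_mem h0, sum_erase, hcard]
  · intro u hu
    obtain ⟨hcard, rfl, h0⟩ := mem_distinctPartSets.mp hu
    simp [mem_finsetsWithSum, card_insert_of_notMem h0, h0, hcard]
  · intro u hu
    exact insert_erase (mem_filter.mp hu).2
  · intro u hu
    exact erase_insert (mem_distinctPartSets.mp hu).2.2

lemma card_distincts_filter_card_parts (n m : ℕ) :
    #{p ∈ Nat.Partition.distincts m | Multiset.card p.parts = n} = #(distinctPartSets n m) := by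
  have sum_toFinset {s : Multiset ℕ} (hs : s.Nodup) : ∑ i ∈ s.toFinset, i = s.sum := by
    rw [sum_eq_multiset_sum, Multiset.toFinset_val, hs.dedup, Multiset.map_id']
  refine card_bij (fun p _ ↦ p.parts.toFinset) (fun p hp ↦ ?_) (fun p hp q hq hpq ↦ ?_)
    (fun u hu ↦ ?_)
  · simp only [Nat.Partition.distincts, mem_filter, mem_univ, true_and] at hp
    refine mem_distinctPartSets.mpr ⟨?_, ?_, ?_⟩
    · rw [Multiset.toFinset_card_of_nodup hp.1, hp.2]
    · rw [sum_toFinset hp.1, p.parts_sum]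
    · simpa using fun h ↦ (p.parts_pos h).ne rfl
  · simp only [Nat.Partition.distincts, mem_filter, mem_univ, true_and] at hp hq
    exact Nat.Partition.ext (Multiset.Nodup.toFinset_inj hp.1 hq.1 hpq)
  · obtain ⟨hcard, hsum, h0⟩ := mem_distinctPartSets.mp hu
    refine ⟨⟨u.val, fun hi ↦ Nat.pos_of_ne_zero (ne_of_mem_of_not_mem hi h0),
      by rwa [sum_eq_multiset_sum, Multiset.map_id'] at hsum⟩, ?_,
      val_toFinset u⟩
    simp [Nat.Partition.distincts, u.nodup, hcard]

lemma card_distincts_eq_sum (m : ℕ) :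
    #(Nat.Partition.distincts m) = ∑ n ∈ range (m + 1), #(distinctPartSets n m) := by
  rw [card_eq_sum_card_fiberwise (f := fun p ↦ Multiset.card p.parts) (t := range (m + 1))]
  · simp_rw [card_distincts_filter_card_parts]
  · intro p _
    have := Multiset.card_nsmul_le_sum (s := p.parts) (a := 1) fun _ hi ↦ p.parts_pos hi
    simp only [smul_eq_mul, mul_one, p.parts_sum] at this
    exact mem_range_succ_iff.mpr this

section Series

variable (R : Type*) [CommRing R]

noncomputable def distinctPartsSeries (n : ℕ) : R⟦X⟧ :=
  mk fun m ↦ (#(distinctPartSets n m) : R)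

lemma distinctPartsSeries_zero : distinctPartsSeries R 0 = 1 := by
  ext m
  by_cases hm : m = 0 <;> simp [distinctPartsSeries, distinctPartSets_zero, coeff_one, hm]

lemma distinctPartsSeries_succ (n : ℕ) :
    distinctPartsSeries R (n + 1) =
      X ^ (n + 1) * (distinctPartsSeries R (n + 1) + distinctPartsSeries R n) := by
  ext m
  rw [coeff_X_pow_mul']
  split_ifs with h
  · obtain ⟨m, rfl⟩ := Nat.exists_eq_add_of_le' h
    simp [distinctPartsSeries, card_distinctPartSets_add, card_finsetsWithSum_succ]
  · simp [distinctPartsSeries, distinctPartSets_eq_empty_of_lt (not_le.mp h)]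

lemma distinctPartsSeries_mul_prod (n : ℕ) :
    distinctPartsSeries R n * ∏ j ∈ range n, (1 - X ^ (j + 1)) = ∏ j ∈ range n, X ^ (j + 1) := by
  induction n with
  | zero => simp [distinctPartsSeries_zero]
  | succ n ih =>
    have recurrence : distinctPartsSeries R (n + 1) * (1 - X ^ (n + 1)) =
        X ^ (n + 1) * distinctPartsSeries R n := by
      linear_combination distinctPartsSeries_succ R n
    rw [prod_range_succ, prod_range_succ, ← ih]
    linear_combination (∏ j ∈ range n, (1 - X ^ (j + 1) : R⟦X⟧)) * recurrence

end Series

lemma sum_range_add_one (n : ℕ) : ∑ j ∈ range n, (j + 1) = n * (n + 1) / 2 := by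
  have h := sum_range_succ' (fun i ↦ i) n
  rw [sum_range_id, add_zero, Nat.add_sub_cancel, Nat.mul_comm] at h
  exact h.symm

lemma distinctPartsSeries_eq {K : Type*} [Field K] (n : ℕ) :
    distinctPartsSeries K n = X ^ (n * (n + 1) / 2) * (∏ j ∈ range n, (1 - X ^ (j + 1)))⁻¹ := by
  rw [PowerSeries.eq_mul_inv_iff_mul_eq, distinctPartsSeries_mul_prod, prod_pow_eq_pow_sum,
    sum_range_add_one]
  simp [map_prod]

/-- Stated coefficient-wise: the coefficient of `q^k` on the right only receives contributions
from `n` with `n(n+1)/2 ≤ k`, so the sum may be truncated at `n = k`. -/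
theorem gen_fun_distinct_parts (k : ℕ) :
    ((Nat.Partition.distincts k).card : ℚ) =
      ∑ n ∈ Finset.range (k + 1),
        PowerSeries.coeff (R := ℚ) k ((PowerSeries.X : PowerSeries ℚ) ^ (n * (n + 1) / 2) *
          (∏ j ∈ Finset.range n, (1 - (PowerSeries.X : PowerSeries ℚ) ^ (j + 1)))⁻¹) := by
  rw [card_distincts_eq_sum, Nat.cast_sum]
  refine sum_congr rfl fun n _ ↦ ?_
  rw [← distinctPartsSeries_eq, distinctPartsSeries, coeff_mk]
end

section
/- Let s(y) := Re(Λ(y)/(1+iy)) - π²N/12, where Λ(y) := N(π²/6 - log(2)²(1+iy)²/2 - Li₂(2^{-(1+iy)})) for y ∈ ℝ and N a positive integer. Then s(y) ≤ 0 for all y ∈ ℝ, with equality if and only if y = 0. -/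
open Real Complex

/-- Complex dilogarithm Li₂(w) = Σ_{n≥1} wⁿ/n² (for |w| < 1 the series converges). -/
noncomputable def Li2C (w : ℂ) : ℂ := ∑' n : ℕ, w ^ (n + 1) / ((n : ℂ) + 1) ^ 2

/-- Λ(y) := N(π²/6 - log(2)²(1+iy)²/2 - Li₂(2^{-(1+iy)})). -/
noncomputable def Lam (N : ℕ) (y : ℝ) : ℂ :=
  (N : ℂ) * ((π : ℂ) ^ 2 / 6 - (Real.log 2 : ℂ) ^ 2 * (1 + (y : ℂ) * Complex.I) ^ 2 / 2 -
    Li2C ((2 : ℂ) ^ (-(1 + (y : ℂ) * Complex.I))))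

/-- s(y) := Re(Λ(y)/(1+iy)) - π²N/12. -/
noncomputable def sfun (N : ℕ) (y : ℝ) : ℝ :=
  (Lam N y / (1 + (y : ℂ) * Complex.I)).re - π ^ 2 * N / 12

/-!
With `s = 1 + iy` and `w = 2^{-s} = e^{-s log 2}`, expand `π²/6 = ζ(2)` and `Li₂(w)` termwise and
use Euler's value `Li₂(1/2) = π²/12 - (log 2)²/2`; this gives
`s(y) = -N Σₙ D(y, (n+1) log 2) / (n+1)²` with `D(y, a) = ∫₀^a e^{-t} (1 - cos(ty)) dt`
(`cosDefect`), because `Re((1 - e^{-as})/s) = ∫₀^a e^{-t} cos(ty) dt`. Every `D(y, a)` is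
nonnegative, all of them vanish at `y = 0`, and `D(y, a) > 0` when `y ≠ 0` and `a > 0`.

Euler's value is the case `x = 1/2` of the reflection formula
`Li₂(x) + Li₂(1-x) = π²/6 - log x log(1-x)`, proved by writing `Li₂(x) = ∫₀^x -log(1-t)/t dt`,
substituting `u = 1 - t` and integrating the geometric expansion of `1/(1-u)` term by term.
-/

open MeasureTheory Set

theorem hasSum_intervalIntegral_of_nonneg {a b : ℝ} (hab : a ≤ b) {F : ℕ → ℝ → ℝ} {f : ℝ → ℝ}
    (hF : ∀ n, IntervalIntegrable (F n) volume a b) (hF_nonneg : ∀ n, ∀ t ∈ Ioc a b, 0 ≤ F n t)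
    (hf : ∀ t ∈ Ioc a b, HasSum (F · t) (f t)) (hsum : Summable fun n => ∫ t in a..b, F n t) :
    HasSum (fun n => ∫ t in a..b, F n t) (∫ t in a..b, f t) := by
  simp only [intervalIntegral.integral_of_le hab] at hsum ⊢
  have hnorm (n : ℕ) : ∫ t in Ioc a b, ‖F n t‖ = ∫ t in Ioc a b, F n t :=
    setIntegral_congr_fun measurableSet_Ioc fun t ht => Real.norm_of_nonneg (hF_nonneg n t ht)
  have h := hasSum_integral_of_summable_integral_norm (fun n => (hF n).1)
    (by simpa only [hnorm] using hsum)
  rwa [setIntegral_congr_fun measurableSet_Ioc fun t ht => (hf t ht).tsum_eq] at h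

theorem hasSum_one_div_succ_sq : HasSum (fun n : ℕ => 1 / ((n : ℝ) + 1) ^ 2) (π ^ 2 / 6) := by
  simpa using (hasSum_nat_add_iff' 1).mpr hasSum_zeta_two

theorem summable_pow_succ_div_succ_sq {x : ℝ} (hx0 : 0 ≤ x) (hx1 : x ≤ 1) :
    Summable fun n : ℕ => x ^ (n + 1) / ((n : ℝ) + 1) ^ 2 :=
  hasSum_one_div_succ_sq.summable.of_nonneg_of_le (fun n => by positivity)
    fun n => div_le_div_of_nonneg_right (pow_le_one₀ hx0 hx1) (by positivity)

theorem hasSum_pow_succ_div_succ_sq_eq_integral {x : ℝ} (hx0 : 0 ≤ x) (hx1 : x < 1) :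
    HasSum (fun n : ℕ => x ^ (n + 1) / ((n : ℝ) + 1) ^ 2) (∫ t in 0..x, -Real.log (1 - t) / t) := by
  have hint (n : ℕ) : ∫ t in 0..x, t ^ n / ((n : ℝ) + 1) = x ^ (n + 1) / ((n : ℝ) + 1) ^ 2 := by
    rw [intervalIntegral.integral_div, integral_pow]
    simp [div_div, sq]
  simp_rw [← hint]
  refine hasSum_intervalIntegral_of_nonneg hx0 (fun n => Continuous.intervalIntegrable
    (by fun_prop) _ _) (fun n t ht => by have := ht.1.le; positivity) (fun t ht => ?_)
    (by simpa only [hint] using summable_pow_succ_div_succ_sq hx0 hx1.le)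
  have habs : |t| < 1 := by rw [abs_of_pos ht.1]; linarith [ht.2]
  have hterm (n : ℕ) : t ^ (n + 1) / ((n : ℝ) + 1) / t = t ^ n / ((n : ℝ) + 1) := by
    field_simp [ht.1.ne']
    ring
  simpa only [hterm] using (hasSum_pow_div_log_of_abs_lt_one habs).div_const t

theorem intervalIntegrable_neg_log_mul_pow (a b : ℝ) (n : ℕ) :
    IntervalIntegrable (fun u => -Real.log u * u ^ n) volume a b :=
  intervalIntegral.intervalIntegrable_log'.neg.mul_continuousOn (continuous_pow n).continuousOn

theorem integral_neg_log_mul_pow {x : ℝ} (hx : 0 < x) (n : ℕ) :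
    ∫ u in x..1, -Real.log u * u ^ n =
      1 / ((n : ℝ) + 1) ^ 2 - x ^ (n + 1) / ((n : ℝ) + 1) ^ 2 +
        Real.log x * (x ^ (n + 1) / ((n : ℝ) + 1)) := by
  have hderiv : ∀ u ∈ uIcc x 1, HasDerivAt
      (fun u => u ^ (n + 1) * (1 / ((n : ℝ) + 1) ^ 2 - Real.log u / ((n : ℝ) + 1)))
      (-Real.log u * u ^ n) u := by
    intro u hu
    have hu0 : u ≠ 0 := (lt_of_lt_of_le (lt_min hx one_pos) hu.1).ne'
    refine ((hasDerivAt_pow (n + 1) u).fun_mul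
      (((Real.hasDerivAt_log hu0).div_const ((n : ℝ) + 1)).const_sub _)).congr_deriv ?_
    field_simp
    push_cast
    ring
  rw [intervalIntegral.integral_eq_sub_of_hasDerivAt hderiv
    (intervalIntegrable_neg_log_mul_pow x 1 n)]
  simp only [one_pow, Real.log_one, zero_div, sub_zero, one_mul]
  ring

theorem hasSum_integral_neg_log_mul_pow {x : ℝ} (hx0 : 0 < x) (hx1 : x < 1) :
    HasSum (fun n : ℕ => ∫ u in x..1, -Real.log u * u ^ n)
      (∫ u in x..1, -Real.log u / (1 - u)) := by
  refine hasSum_intervalIntegral_of_nonneg hx1.le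
    (fun n => intervalIntegrable_neg_log_mul_pow x 1 n) (fun n u hu => ?_) (fun u hu => ?_) ?_
  · have hu0 : 0 < u := hx0.trans hu.1
    have := Real.log_nonpos hu0.le hu.2
    have := pow_nonneg hu0.le n
    nlinarith
  · rcases hu.2.lt_or_eq with hu1 | rfl
    · simpa only [div_eq_mul_inv] using
        (hasSum_geometric_of_lt_one (hx0.trans hu.1).le hu1).mul_left (-Real.log u)
    · simp
  · simp only [integral_neg_log_mul_pow hx0]
    exact ((hasSum_one_div_succ_sq.summable.sub (summable_pow_succ_div_succ_sq hx0.le hx1.le)).add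
      ((hasSum_pow_div_log_of_abs_lt_one (by rw [abs_of_pos hx0]; exact hx1)).summable.mul_left _))

theorem hasSum_pow_succ_add_one_sub_pow_succ_div_succ_sq {x : ℝ} (hx0 : 0 < x) (hx1 : x < 1) :
    HasSum (fun n : ℕ => (x ^ (n + 1) + (1 - x) ^ (n + 1)) / ((n : ℝ) + 1) ^ 2)
      (π ^ 2 / 6 - Real.log x * Real.log (1 - x)) := by
  have hx := hasSum_pow_succ_div_succ_sq_eq_integral hx0.le hx1
  have hx' := hasSum_pow_succ_div_succ_sq_eq_integral (x := 1 - x) (by linarith) (by linarith)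
  have hsub : ∫ t in 0..x, -Real.log (1 - t) / t = ∫ u in (1 - x)..1, -Real.log u / (1 - u) := by
    simpa using intervalIntegral.integral_comp_sub_left (a := 0) (b := x)
      (fun u => -Real.log u / (1 - u)) 1
  have hgeom := hasSum_integral_neg_log_mul_pow (x := 1 - x) (by linarith) (by linarith)
  simp only [integral_neg_log_mul_pow (x := 1 - x) (by linarith), ← hsub] at hgeom
  have hlog : |1 - x| < 1 := by rw [abs_of_pos (by linarith)]; linarith
  have hI := hgeom.unique <| (hasSum_one_div_succ_sq.sub hx').add
    ((hasSum_pow_div_log_of_abs_lt_one hlog).mul_left (Real.log (1 - x)))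
  rw [sub_sub_cancel] at hI
  convert hx.add hx' using 1
  · ext n
    ring
  · linarith

theorem hasSum_half_pow_succ_div_succ_sq :
    HasSum (fun n : ℕ => (1 / 2 : ℝ) ^ (n + 1) / ((n : ℝ) + 1) ^ 2)
      (π ^ 2 / 12 - Real.log 2 ^ 2 / 2) := by
  have h := (hasSum_pow_succ_add_one_sub_pow_succ_div_succ_sq (x := 1 / 2) (by norm_num)
    (by norm_num)).div_const 2
  have hterm (n : ℕ) : ((1 / 2 : ℝ) ^ (n + 1) + (1 / 2) ^ (n + 1)) / ((n : ℝ) + 1) ^ 2 / 2 =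
      (1 / 2) ^ (n + 1) / ((n : ℝ) + 1) ^ 2 := by ring
  rw [show (1 : ℝ) - 1 / 2 = 1 / 2 by norm_num, one_div, Real.log_inv] at h
  simp only [← one_div, hterm] at h
  rwa [show (π ^ 2 / 6 - -Real.log 2 * -Real.log 2) / 2 = π ^ 2 / 12 - Real.log 2 ^ 2 / 2 by
    ring] at h

noncomputable def cosDefect (y a : ℝ) : ℝ :=
  ∫ t in 0..a, Real.exp (-t) * (1 - Real.cos (t * y))

theorem cosDefect_zero_left (a : ℝ) : cosDefect 0 a = 0 := by
  simp [cosDefect]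

theorem cosDefect_nonneg (y : ℝ) {a : ℝ} (ha : 0 ≤ a) : 0 ≤ cosDefect y a :=
  intervalIntegral.integral_nonneg ha fun _ _ =>
    mul_nonneg (Real.exp_pos _).le (sub_nonneg.2 (Real.cos_le_one _))

theorem cosDefect_pos {y a : ℝ} (hy : y ≠ 0) (ha : 0 < a) : 0 < cosDefect y a := by
  set c := min a (π / |y|)
  have hc : 0 < c := lt_min ha (by positivity)
  have hcy : |c * y| ≤ π := by
    rw [abs_mul, abs_of_pos hc, ← le_div_iff₀ (abs_pos.2 hy)]
    exact min_le_right _ _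
  have hcos : Real.cos (c * y) < 1 := by
    refine (Real.cos_le_one _).lt_of_ne fun h => mul_ne_zero hc.ne' hy ?_
    rw [← Real.cos_abs] at h
    exact abs_eq_zero.1 <| (Real.cos_eq_one_iff_of_lt_of_lt (by linarith [abs_nonneg (c * y),
      Real.pi_pos]) (by linarith [Real.pi_pos])).1 h
  have h := intervalIntegral.integral_lt_integral_of_continuousOn_of_le_of_exists_lt ha
    continuousOn_const (f := fun _ => (0 : ℝ))
    (g := fun t => Real.exp (-t) * (1 - Real.cos (t * y))) (by fun_prop)
    (fun t _ => mul_nonneg (Real.exp_pos _).le (sub_nonneg.2 (Real.cos_le_one _)))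
    ⟨c, ⟨hc.le, min_le_left _ _⟩, mul_pos (Real.exp_pos _) (sub_pos.2 hcos)⟩
  simpa [cosDefect] using h

theorem re_one_sub_cexp_div (y a : ℝ) :
    ((1 - cexp (-(a * (1 + y * I)))) / (1 + y * I)).re = 1 - Real.exp (-a) - cosDefect y a := by
  have hs : (1 + y * I : ℂ) ≠ 0 := fun h => by simpa using congrArg Complex.re h
  have hexp {c : ℂ} (hc : c ≠ 0) : ∫ t in 0..a, cexp (-c * t) = (1 - cexp (-(a * c))) / c := by
    rw [integral_exp_mul_complex (neg_ne_zero.2 hc)]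
    simp only [Complex.ofReal_zero, mul_zero, Complex.exp_zero]
    field_simp
    ring
  have hre : cosDefect y a = (∫ t in 0..a, (cexp (-1 * t) - cexp (-(1 + y * I) * t))).re := by
    rw [← RCLike.re_to_complex,
      ← intervalIntegral.intervalIntegral_re (Continuous.intervalIntegrable (by fun_prop) _ _),
      cosDefect]
    congr 1 with t
    simp [Complex.exp_re, mul_comm t y]
    ring
  rw [hre, intervalIntegral.integral_sub (Continuous.intervalIntegrable (by fun_prop) _ _)
    (Continuous.intervalIntegrable (by fun_prop) _ _), hexp one_ne_zero, hexp hs]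
  simp [Complex.exp_re]

theorem hasSum_Li2C {w : ℂ} (hw : ‖w‖ ≤ 1) :
    HasSum (fun n : ℕ => w ^ (n + 1) / ((n : ℂ) + 1) ^ 2) (Li2C w) := by
  refine (Summable.of_norm_bounded hasSum_one_div_succ_sq.summable fun n => ?_).hasSum
  have hn : ‖(n : ℂ) + 1‖ = (n : ℝ) + 1 := by exact_mod_cast Complex.norm_natCast (n + 1)
  rw [norm_div, norm_pow, norm_pow, hn]
  exact div_le_div_of_nonneg_right (pow_le_one₀ (norm_nonneg w) hw) (by positivity)

theorem hasSum_re_one_sub_pow_succ_div {w : ℂ} (hw : ‖w‖ ≤ 1) (s : ℂ) :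
    HasSum (fun n : ℕ => ((1 - w ^ (n + 1)) / s).re / ((n : ℝ) + 1) ^ 2)
      ((π ^ 2 / 6 - Li2C w) / s).re := by
  have h := ((Complex.hasSum_ofReal.2 hasSum_one_div_succ_sq).sub (hasSum_Li2C hw)).div_const s
  have hterm (n : ℕ) : (((1 / ((n : ℝ) + 1) ^ 2 : ℝ) : ℂ) - w ^ (n + 1) / ((n : ℂ) + 1) ^ 2) / s =
      (1 - w ^ (n + 1)) / s / (((n : ℝ) + 1) ^ 2 : ℝ) := by
    push_cast
    field_simp
  simp only [hterm] at h
  rw [show ((π ^ 2 / 6 : ℝ) : ℂ) = π ^ 2 / 6 by push_cast; rfl] at h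
  simpa only [Complex.div_ofReal_re] using Complex.hasSum_re h

theorem two_cpow_neg_pow (s : ℂ) (k : ℕ) :
    ((2 : ℂ) ^ (-s)) ^ k = cexp (-((k * Real.log 2 : ℝ) * s)) := by
  rw [Complex.cpow_def_of_ne_zero two_ne_zero, ← Complex.exp_nat_mul,
    ← Complex.ofReal_ofNat, ← Complex.ofReal_log zero_le_two]
  push_cast
  ring_nf

theorem re_one_sub_two_cpow_neg_pow_succ_div (y : ℝ) (n : ℕ) :
    ((1 - ((2 : ℂ) ^ (-(1 + y * I))) ^ (n + 1)) / (1 + y * I)).re =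
      1 - (1 / 2) ^ (n + 1) - cosDefect y ((n + 1) * Real.log 2) := by
  have hexp : Real.exp (-((n + 1) * Real.log 2)) = (1 / 2) ^ (n + 1) := by
    rw [mul_comm, Real.exp_neg, Real.exp_mul, Real.exp_log two_pos]
    norm_cast
    simp
  rw [two_cpow_neg_pow, ← hexp, ← re_one_sub_cexp_div]
  push_cast
  rfl

theorem sfun_eq (N : ℕ) (y : ℝ) :
    sfun N y = N * (((π ^ 2 / 6 - Li2C ((2 : ℂ) ^ (-(1 + y * I)))) / (1 + y * I)).re -
      (π ^ 2 / 12 + Real.log 2 ^ 2 / 2)) := by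
  have hs : (1 + y * I : ℂ) ≠ 0 := fun h => by simpa using congrArg Complex.re h
  have hLam : Lam N y / (1 + y * I) = (N : ℝ) * ((π ^ 2 / 6 - Li2C ((2 : ℂ) ^ (-(1 + y * I)))) /
      (1 + y * I) - (Real.log 2 ^ 2 / 2 : ℝ) * (1 + y * I)) := by
    rw [Lam]
    field_simp
    push_cast
    ring
  rw [sfun, hLam, Complex.re_ofReal_mul, Complex.sub_re, Complex.re_ofReal_mul]
  simp only [Complex.add_re, Complex.one_re, Complex.mul_re, Complex.ofReal_re, Complex.I_re,
    Complex.ofReal_im, Complex.I_im]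
  ring

theorem hasSum_sfun (N : ℕ) (y : ℝ) :
    HasSum (fun n : ℕ => -(N * cosDefect y ((n + 1) * Real.log 2) / ((n : ℝ) + 1) ^ 2))
      (sfun N y) := by
  rw [sfun_eq]
  have hw : ‖(2 : ℂ) ^ (-(1 + y * I))‖ ≤ 1 := by
    rw [← pow_one ((2 : ℂ) ^ _), two_cpow_neg_pow, Complex.norm_exp, Real.exp_le_one_iff]
    simp only [Complex.neg_re, Complex.re_ofReal_mul, Complex.add_re, Complex.one_re,
      Complex.I_re, mul_zero, add_zero, mul_one, neg_nonpos]
    positivity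
  have hC := hasSum_re_one_sub_pow_succ_div hw (1 + y * I)
  simp only [re_one_sub_two_cpow_neg_pow_succ_div] at hC
  have hterm (n : ℕ) : N * ((1 - (1 / 2) ^ (n + 1) - cosDefect y ((n + 1) * Real.log 2)) /
      ((n : ℝ) + 1) ^ 2 - (1 / ((n : ℝ) + 1) ^ 2 - (1 / 2) ^ (n + 1) / ((n : ℝ) + 1) ^ 2)) =
      -(N * cosDefect y ((n + 1) * Real.log 2) / ((n : ℝ) + 1) ^ 2) := by
    ring
  rw [show π ^ 2 / 12 + Real.log 2 ^ 2 / 2 = π ^ 2 / 6 - (π ^ 2 / 12 - Real.log 2 ^ 2 / 2) by ring]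
  simpa only [hterm] using
    (hC.sub (hasSum_one_div_succ_sq.sub hasSum_half_pow_succ_div_succ_sq)).mul_left (N : ℝ)

/-- s(y) ≤ 0 for all y ∈ ℝ, with equality iff y = 0. -/
theorem sfun_nonpos (N : ℕ) (hN : 0 < N) (y : ℝ) :
    sfun N y ≤ 0 ∧ (sfun N y = 0 ↔ y = 0) := by
  have h := hasSum_sfun N y
  have hterm_nonpos (n : ℕ) :
      -(N * cosDefect y ((n + 1) * Real.log 2) / ((n : ℝ) + 1) ^ 2) ≤ 0 := by
    have := cosDefect_nonneg y (a := (n + 1) * Real.log 2) (by positivity)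
    simp only [neg_nonpos]
    positivity
  refine ⟨h.nonpos hterm_nonpos, fun h0 => ?_, ?_⟩
  · by_contra hy
    have hterm_neg : -(N * cosDefect y ((0 + 1) * Real.log 2) / ((0 : ℝ) + 1) ^ 2) < 0 := by
      have := cosDefect_pos hy (a := (0 + 1) * Real.log 2) (by positivity)
      have : (0 : ℝ) < N := by exact_mod_cast hN
      simp only [neg_neg_iff_pos]
      positivity
    exact (hasSum_lt hterm_nonpos (i := 0) (by simpa using hterm_neg) h hasSum_zero).ne h0
  · rintro rfl
    simp only [cosDefect_zero_left, mul_zero, zero_div, neg_zero] at h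
    exact h.unique hasSum_zero
end

section
/- Let f be a holomorphic (or C^∞) function on [a, a+mz] along the ray parametrized by t ↦ a + tz, t ∈ [0,m], with a ∈ ℂ, z ∈ ℂ∖{0}, m ∈ ℕ, R ∈ ℕ. Then Σ_{n=0}^{m} f(nz+a) = (1/z)∫_a^{a+mz} f(x)dx + (f(mz+a)+f(a))/2 + Σ_{r=1}^{R} (B_{2r} z^{2r-1}/(2r)!)(f^{(2r-1)}(mz+a) - f^{(2r-1)}(a)) + E, where |E| ≤ C·|z|^{2R}·∫_a^{a+mz} |f^{(2R+1)}(x)| |dx| for an absolute constant C depending only on R. -/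
open Complex intervalIntegral

/-!
On a unit interval `[x, x + 1]`, integrating `F` repeatedly by parts against the Bernoulli
polynomials `B_k (t - x)` (using `B_{k+1}' = (k + 1) B_k`, `B_1(1) = -B_1(0) = 1/2`,
`B_k(1) = B_k(0) = B_k` for `k ≠ 1`, and `B_k = 0` for odd `k > 1`) turns the trapezoid error
`(F x + F (x + 1)) / 2 - ∫ F` into the corrections `B_{2r} / (2r)! · Δ F^{(2r-1)}` plus the
remainder `∫ B_{2R+1}(t - x) / (2R+1)! · F^{(2R+1)}(t) dt`. Summing over `[n, n + 1]`, `n < m`,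
the corrections telescope, and each remainder is at most `sup_{[0,1]} |B_{2R+1}| / (2R+1)!`
times `∫ |F^{(2R+1)}|`. The theorem is the case `F(t) = f(a + t z)`, whose `k`-th derivative
is `z ^ k f^{(k)}(a + t z)` because `f` is holomorphic near the segment.
-/

namespace EulerMaclaurin

variable {E : Type*} [NormedAddCommGroup E] [NormedSpace ℝ E]

def HasDerivChainOn (F : ℕ → ℝ → E) (s : Set ℝ) : Prop :=
  ∀ k, ∀ t ∈ s, HasDerivAt (F k) (F (k + 1) t) t

noncomputable def remainder (F : ℕ → ℝ → E) (x : ℝ) (K : ℕ) : E :=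
  (K.factorial : ℝ)⁻¹ • ∫ t in x..x + 1, bernoulliFun K (t - x) • F K t

section DerivChain

variable {F : ℕ → ℝ → E}

lemma HasDerivChainOn.mono {s s' : Set ℝ} (hF : HasDerivChainOn F s) (hs : s' ⊆ s) :
    HasDerivChainOn F s' :=
  fun k t ht => hF k t (hs ht)

lemma HasDerivChainOn.continuousOn {s : Set ℝ} (hF : HasDerivChainOn F s) (k : ℕ) :
    ContinuousOn (F k) s :=
  fun t ht => (hF k t ht).continuousAt.continuousWithinAt

lemma HasDerivChainOn.intervalIntegrable {a b : ℝ} (hF : HasDerivChainOn F (Set.Icc a b))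
    (hab : a ≤ b) (k : ℕ) : IntervalIntegrable (F k) MeasureTheory.volume a b :=
  (hF.continuousOn k).intervalIntegrable_of_Icc hab

lemma HasDerivChainOn.unitInterval {m : ℕ} (hF : HasDerivChainOn F (Set.Icc 0 m)) {n : ℕ}
    (hn : n < m) : HasDerivChainOn F (Set.Icc n (n + 1)) :=
  hF.mono (Set.Icc_subset_Icc n.cast_nonneg (by exact_mod_cast hn))

end DerivChain

lemma hasDerivAt_bernoulliFun_succ_sub (K : ℕ) (x t : ℝ) :
    HasDerivAt (fun t => bernoulliFun (K + 1) (t - x)) ((K + 1) * bernoulliFun K (t - x)) t := by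
  simpa using (hasDerivAt_bernoulliFun (K + 1) (t - x)).comp_sub_const t x

lemma exists_pos_abs_bernoulliFun_le (K : ℕ) :
    ∃ M > 0, ∀ s ∈ Set.Icc (0 : ℝ) 1, |bernoulliFun K s| ≤ M := by
  obtain ⟨M, hM⟩ := isCompact_Icc.exists_bound_of_continuousOn
    (continuous_bernoulliFun K).continuousOn (s := Set.Icc (0 : ℝ) 1)
  exact ⟨max M 1, by positivity, fun s hs => (hM s hs).trans (le_max_left _ _)⟩

lemma sum_range_trapezoid {V : Type*} [AddCommGroup V] [Module ℝ V] (g : ℕ → V) (m : ℕ) :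
    ∑ n ∈ Finset.range m, (2 : ℝ)⁻¹ • (g n + g (n + 1)) =
      ∑ n ∈ Finset.range (m + 1), g n - (2 : ℝ)⁻¹ • (g m + g 0) := by
  have hlast := Finset.sum_range_succ g m
  have hfirst := Finset.sum_range_succ' g m
  rw [← Finset.smul_sum, Finset.sum_add_distrib, hlast]
  rw [hlast] at hfirst
  linear_combination (norm := module) (-(2 : ℝ)⁻¹) • hfirst

lemma sum_integral_unit_intervals {g : ℝ → E} {m : ℕ}
    (hg : ∀ n < m, IntervalIntegrable g MeasureTheory.volume n (n + 1)) :
    ∑ n ∈ Finset.range m, ∫ t in (n : ℝ)..n + 1, g t = ∫ t in (0 : ℝ)..m, g t := by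
  simpa using sum_integral_adjacent_intervals (a := fun n : ℕ => (n : ℝ))
    (μ := MeasureTheory.volume) (f := g) (n := m) (fun n hn => by simpa using hg n hn)

section UnitInterval

variable {F : ℕ → ℝ → E} {x : ℝ}

lemma norm_remainder_le (hF : HasDerivChainOn F (Set.Icc x (x + 1))) {K : ℕ} {M : ℝ}
    (hM : ∀ s ∈ Set.Icc (0 : ℝ) 1, |bernoulliFun K s| ≤ M) :
    ‖remainder F x K‖ ≤ M / K.factorial * ∫ t in x..x + 1, ‖F K t‖ := by
  have hx : x ≤ x + 1 := by linarith
  have hint : ‖∫ t in x..x + 1, bernoulliFun K (t - x) • F K t‖ ≤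
      ∫ t in x..x + 1, M * ‖F K t‖ := by
    refine norm_integral_le_of_norm_le hx (Filter.Eventually.of_forall fun t ht => ?_)
      (((hF.continuousOn K).norm.const_smul M).intervalIntegrable_of_Icc hx)
    rw [norm_smul, Real.norm_eq_abs]
    exact mul_le_mul_of_nonneg_right
      (hM _ ⟨by linarith [ht.1], by linarith [ht.2]⟩) (norm_nonneg _)
  rw [integral_const_mul] at hint
  calc ‖remainder F x K‖
      = (K.factorial : ℝ)⁻¹ * ‖∫ t in x..x + 1, bernoulliFun K (t - x) • F K t‖ := by
        rw [remainder, norm_smul, norm_inv, RCLike.norm_natCast]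
    _ ≤ (K.factorial : ℝ)⁻¹ * (M * ∫ t in x..x + 1, ‖F K t‖) := by gcongr
    _ = M / K.factorial * ∫ t in x..x + 1, ‖F K t‖ := by ring

variable [CompleteSpace E]

lemma integral_bernoulliFun_smul_succ (hF : HasDerivChainOn F (Set.Icc x (x + 1))) (K : ℕ) :
    ∫ t in x..x + 1, bernoulliFun (K + 1) (t - x) • F (K + 1) t =
      bernoulliFun (K + 1) 1 • F K (x + 1) - bernoulliFun (K + 1) 0 • F K x -
        ((K : ℝ) + 1) • ∫ t in x..x + 1, bernoulliFun K (t - x) • F K t := by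
  have hx : x ≤ x + 1 := by linarith
  rw [← integral_smul]
  simp_rw [smul_smul]
  convert integral_smul_deriv_eq_deriv_smul (fun t _ => hasDerivAt_bernoulliFun_succ_sub K x t)
    (fun t ht => hF K t (by rwa [Set.uIcc_of_le hx] at ht))
    ((continuous_const.mul ((continuous_bernoulliFun K).comp
      (continuous_id.sub continuous_const))).intervalIntegrable _ _)
    (hF.intervalIntegrable hx (K + 1)) using 3 <;> simp only [add_sub_cancel_left, sub_self]

lemma remainder_succ (hF : HasDerivChainOn F (Set.Icc x (x + 1))) (K : ℕ) :
    remainder F x (K + 1) =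
      ((K + 1).factorial : ℝ)⁻¹ • (bernoulliFun (K + 1) 1 • F K (x + 1) -
        bernoulliFun (K + 1) 0 • F K x) - remainder F x K := by
  rw [remainder, remainder, integral_bernoulliFun_smul_succ hF, smul_sub, smul_smul]
  congr 2
  rw [Nat.factorial_succ]
  push_cast
  field_simp

lemma remainder_one (hF : HasDerivChainOn F (Set.Icc x (x + 1))) :
    remainder F x 1 = (2 : ℝ)⁻¹ • (F 0 x + F 0 (x + 1)) - ∫ t in x..x + 1, F 0 t := by
  rw [remainder_succ hF 0]
  norm_num [remainder, bernoulliFun_one, bernoulliFun_zero, smul_add, add_comm]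

lemma remainder_succ_of_ne_zero (hF : HasDerivChainOn F (Set.Icc x (x + 1))) {K : ℕ}
    (hK : K ≠ 0) :
    remainder F x (K + 1) =
      ((bernoulli (K + 1) : ℝ) / (K + 1).factorial) • (F K (x + 1) - F K x) -
        remainder F x K := by
  rw [remainder_succ hF, bernoulliFun_endpoints_eq_of_ne_one (by omega), bernoulliFun_eval_zero,
    ← smul_sub, smul_smul, div_eq_inv_mul]

lemma trapezoid_sub_integral_eq (hF : HasDerivChainOn F (Set.Icc x (x + 1))) (R : ℕ) :
    (2 : ℝ)⁻¹ • (F 0 x + F 0 (x + 1)) - ∫ t in x..x + 1, F 0 t =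
      ∑ r ∈ Finset.Icc 1 R, ((bernoulli (2 * r) : ℝ) / (2 * r).factorial) •
          (F (2 * r - 1) (x + 1) - F (2 * r - 1) x) + remainder F x (2 * R + 1) := by
  induction R with
  | zero => simp [remainder_one hF]
  | succ R ih =>
    have hodd : bernoulli (2 * R + 1 + 1 + 1) = 0 :=
      bernoulli_eq_zero_of_odd ⟨R + 1, by ring⟩ (by omega)
    rw [ih, Finset.sum_Icc_succ_top (by omega), show 2 * (R + 1) = 2 * R + 1 + 1 by ring,
      Nat.add_sub_cancel, remainder_succ_of_ne_zero hF (K := 2 * R + 1 + 1) (by omega),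
      remainder_succ_of_ne_zero hF (K := 2 * R + 1) (by omega), hodd]
    simp only [Rat.cast_zero, zero_div, zero_smul, zero_sub]
    abel

end UnitInterval

section Segment

variable {F : ℕ → ℝ → E} {m : ℕ}

lemma norm_sum_remainder_le (hF : HasDerivChainOn F (Set.Icc 0 m)) {K : ℕ} {M : ℝ}
    (hM : ∀ s ∈ Set.Icc (0 : ℝ) 1, |bernoulliFun K s| ≤ M) :
    ‖∑ n ∈ Finset.range m, remainder F n K‖ ≤
      M / K.factorial * ∫ t in (0 : ℝ)..m, ‖F K t‖ := by
  rw [← sum_integral_unit_intervals fun n hn =>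
    ((hF.unitInterval hn).intervalIntegrable (by linarith) K).norm, Finset.mul_sum]
  exact (norm_sum_le _ _).trans <| Finset.sum_le_sum fun n hn =>
    norm_remainder_le (hF.unitInterval (Finset.mem_range.1 hn)) hM

lemma sum_range_eq_integral_add_corrections [CompleteSpace E]
    (hF : HasDerivChainOn F (Set.Icc 0 m)) (R : ℕ) :
    ∑ n ∈ Finset.range (m + 1), F 0 n =
      (∫ t in (0 : ℝ)..m, F 0 t) + (2 : ℝ)⁻¹ • (F 0 m + F 0 0) +
        ∑ r ∈ Finset.Icc 1 R, ((bernoulli (2 * r) : ℝ) / (2 * r).factorial) •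
          (F (2 * r - 1) m - F (2 * r - 1) 0) +
        ∑ n ∈ Finset.range m, remainder F n (2 * R + 1) := by
  have htrap := sum_range_trapezoid (fun n : ℕ => F 0 n) m
  have hint := sum_integral_unit_intervals fun n hn =>
    (hF.unitInterval hn).intervalIntegrable (by linarith) 0
  have htel : ∀ k, ∑ n ∈ Finset.range m, (F k (n + 1) - F k n) = F k m - F k 0 := fun k => by
    simpa using Finset.sum_range_sub (fun n : ℕ => F k n) m
  have hunit : ∀ n ∈ Finset.range m, remainder F n (2 * R + 1) =
      (2 : ℝ)⁻¹ • (F 0 n + F 0 (n + 1)) - (∫ t in (n : ℝ)..n + 1, F 0 t) -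
        ∑ r ∈ Finset.Icc 1 R, ((bernoulli (2 * r) : ℝ) / (2 * r).factorial) •
          (F (2 * r - 1) (n + 1) - F (2 * r - 1) n) := fun n hn => by
    rw [trapezoid_sub_integral_eq (hF.unitInterval (Finset.mem_range.1 hn))]
    abel
  rw [Finset.sum_congr rfl hunit, Finset.sum_sub_distrib, Finset.sum_sub_distrib, Finset.sum_comm,
    hint]
  simp only [← Finset.smul_sum, htel]
  rw [← Finset.smul_sum] at htrap
  push_cast at htrap
  rw [htrap]
  abel

end Segment

noncomputable def rayDeriv (f : ℂ → ℂ) (a z : ℂ) (k : ℕ) (t : ℝ) : ℂ :=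
  z ^ k * iteratedDeriv k f (a + t * z)

section Ray

variable {f : ℂ → ℂ} {U : Set ℂ} {a z : ℂ}

lemma hasDerivChainOn_rayDeriv {s : Set ℝ} (hU : IsOpen U) (hf : DifferentiableOn ℂ f U)
    (hs : ∀ t ∈ s, a + t * z ∈ U) : HasDerivChainOn (rayDeriv f a z) s := by
  intro k t ht
  have hderiv : HasDerivAt (iteratedDeriv k f) (iteratedDeriv (k + 1) f (a + t * z))
      (a + t * z) := by
    rw [iteratedDeriv_succ, iteratedDeriv_eq_iterate]
    exact ((hf.analyticOnNhd hU).iterated_deriv k _ (hs t ht)).differentiableAt.hasDerivAt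
  have hline : HasDerivAt (fun w : ℂ => a + w * z) z t := by
    simpa using ((hasDerivAt_id (t : ℂ)).mul_const z).const_add a
  have hsucc : rayDeriv f a z (k + 1) t = z ^ k * (iteratedDeriv (k + 1) f (a + t * z) * z) := by
    rw [rayDeriv, pow_succ]
    ring
  rw [hsucc]
  exact ((hderiv.comp (t : ℂ) hline).comp_ofReal).const_mul (z ^ k)

lemma integral_norm_rayDeriv (f : ℂ → ℂ) (a z : ℂ) (k : ℕ) (m : ℝ) :
    ∫ t in (0 : ℝ)..m, ‖rayDeriv f a z k t‖ =
      ‖z‖ ^ k * ∫ t in (0 : ℝ)..m, ‖iteratedDeriv k f (a + t * z)‖ := by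
  simp [rayDeriv, integral_const_mul]

lemma sum_range_ray_eq {m : ℕ} (hU : IsOpen U) (hf : DifferentiableOn ℂ f U)
    (hmem : ∀ t ∈ Set.Icc (0 : ℝ) m, a + t * z ∈ U) (R : ℕ) :
    ∑ n ∈ Finset.range (m + 1), f (n * z + a) =
      (∫ t in (0 : ℝ)..m, f (a + t * z)) + (f (m * z + a) + f a) / 2 +
        ∑ r ∈ Finset.Icc 1 R,
          ((bernoulli (2 * r) : ℂ) * z ^ (2 * r - 1) / (2 * r).factorial) *
            (iteratedDeriv (2 * r - 1) f (m * z + a) - iteratedDeriv (2 * r - 1) f a) +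
        ∑ n ∈ Finset.range m, remainder (rayDeriv f a z) n (2 * R + 1) := by
  have h := sum_range_eq_integral_add_corrections (hasDerivChainOn_rayDeriv hU hf hmem) R
  simp only [rayDeriv, pow_zero, one_mul, iteratedDeriv_zero, Complex.real_smul,
    Complex.ofReal_natCast, Complex.ofReal_zero, zero_mul, add_zero] at h
  simp only [fun w : ℂ => add_comm (w * z) a]
  rw [h]
  congr 2
  · push_cast
    ring
  · refine Finset.sum_congr rfl fun r _ => ?_
    push_cast
    ring

end Ray

end EulerMaclaurin

open EulerMaclaurin

/-- Euler–Maclaurin summation along the ray t ↦ a + tz: for each R there is a constant C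
(depending only on R) such that for every a, z ≠ 0, m and every function f holomorphic on
an open neighbourhood of the segment [a, a + mz],
Σ_{n=0}^m f(nz+a) = (1/z)∫_a^{a+mz} f + (f(mz+a)+f(a))/2
  + Σ_{r=1}^R (B_{2r} z^{2r-1}/(2r)!)(f^{(2r-1)}(mz+a) - f^{(2r-1)}(a)) + E,
with |E| ≤ C |z|^{2R} ∫_a^{a+mz} |f^{(2R+1)}| |dx|. The straight-line integrals are written
via the parametrization x = a + tz, so that (1/z)∫_a^{a+mz} f dx = ∫_0^m f(a+tz) dt and
∫_a^{a+mz} |g| |dx| = |z| ∫_0^m |g(a+tz)| dt. -/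
theorem euler_maclaurin_ray (R : ℕ) :
    ∃ C > 0, ∀ (a z : ℂ) (m : ℕ) (f : ℂ → ℂ) (U : Set ℂ),
      IsOpen U → (∀ t : ℝ, t ∈ Set.Icc (0 : ℝ) (m : ℝ) → a + (t : ℂ) * z ∈ U) →
      DifferentiableOn ℂ f U → z ≠ 0 →
      ‖(∑ n ∈ Finset.range (m + 1), f ((n : ℂ) * z + a)) -
          ((∫ t in (0 : ℝ)..(m : ℝ), f (a + (t : ℂ) * z)) +
            (f ((m : ℂ) * z + a) + f a) / 2 +
            ∑ r ∈ Finset.Icc 1 R,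
              ((bernoulli (2 * r) : ℂ) * z ^ (2 * r - 1) / ((2 * r).factorial : ℂ)) *
                (iteratedDeriv (2 * r - 1) f ((m : ℂ) * z + a) -
                  iteratedDeriv (2 * r - 1) f a))‖ ≤
        C * ‖z‖ ^ (2 * R) *
          (‖z‖ * ∫ t in (0 : ℝ)..(m : ℝ), ‖iteratedDeriv (2 * R + 1) f (a + (t : ℂ) * z)‖) := by
  obtain ⟨M, hM_pos, hM⟩ := exists_pos_abs_bernoulliFun_le (2 * R + 1)
  refine ⟨M / (2 * R + 1).factorial, by positivity, fun a z m f U hU hmem hf _ => ?_⟩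
  rw [sum_range_ray_eq hU hf hmem R, add_sub_cancel_left]
  calc _ ≤ M / (2 * R + 1).factorial *
          ∫ t in (0 : ℝ)..m, ‖rayDeriv f a z (2 * R + 1) t‖ :=
        norm_sum_remainder_le (hasDerivChainOn_rayDeriv hU hf hmem) hM
    _ = _ := by
        rw [integral_norm_rayDeriv, pow_succ]
        ring
end
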